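/- arXiv:1805.02425 — 4 statements merged into one kernel-verified Lean document; each statement's English description precedes it below -/
import Mathlib

section
/- Let V be a vector space over a field k, q ∈ k with q ≠ 0,1, and let X₁, X₂, T be linear endomorphisms of V satisfying X₁T = TX₂ - (q-1)X₂, X₂T = TX₁ + (q-1)X₂, (T - q)(T + 1) = 0, and X₁X₂ = X₂X₁. Suppose λ₁, λ₂ ∈ k∖{0} satisfy λ₁ ≠ qλ₂ and λ₁ ≠ q⁻¹λ₂. If V contains a nonzero simultaneous eigenvector v with X₁v = λ₁v and X₂v = λ₂v, then V contains a nonzero simultaneous eigenvector w with X₁w = λ₂w and X₂w = λ₁w. -/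
/-- Let `V` be a vector space over a field `k`, `q ∈ k` with `q ≠ 0,1`, and
`X₁, X₂, T` linear endomorphisms of `V` satisfying the rank-2 affine Hecke relations
`X₁T = TX₂ - (q-1)X₂`, `X₂T = TX₁ + (q-1)X₂`, `(T-q)(T+1) = 0`, `X₁X₂ = X₂X₁`.
If `λ₁, λ₂` are nonzero scalars with `λ₁ ≠ qλ₂` and `λ₁ ≠ q⁻¹λ₂` and `V` contains a nonzero
simultaneous eigenvector for `(X₁, X₂)` with eigenvalues `(λ₁, λ₂)`, then `V` contains a
nonzero simultaneous eigenvector with eigenvalues `(λ₂, λ₁)`. -/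
theorem hecke_rank_two_eigenvector_swap
    (k V : Type*) [Field k] [AddCommGroup V] [Module k V]
    (q : k) (hq0 : q ≠ 0) (hq1 : q ≠ 1)
    (X₁ X₂ T : Module.End k V)
    (h1 : X₁ * T = T * X₂ - (q - 1) • X₂)
    (h2 : X₂ * T = T * X₁ + (q - 1) • X₂)
    (h3 : (T - q • (1 : Module.End k V)) * (T + 1) = 0)
    (h4 : X₁ * X₂ = X₂ * X₁)
    (lam₁ lam₂ : k) (hl₁ : lam₁ ≠ 0) (hl₂ : lam₂ ≠ 0)
    (hne₁ : lam₁ ≠ q * lam₂) (hne₂ : lam₁ ≠ q⁻¹ * lam₂)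
    (v : V) (hv : v ≠ 0) (hv₁ : X₁ v = lam₁ • v) (hv₂ : X₂ v = lam₂ • v) :
    ∃ w : V, w ≠ 0 ∧ X₁ w = lam₂ • w ∧ X₂ w = lam₁ • w := by
  by_cases hll : lam₁ = lam₂
  · subst hll; exact ⟨v, hv, hv₁, hv₂⟩
  · have hd : lam₁ - lam₂ ≠ 0 := sub_ne_zero.mpr hll
    obtain ⟨c, hckey⟩ : ∃ c : k, c * (lam₁ - lam₂) = (q - 1) * lam₂ :=
      ⟨(q - 1) * lam₂ / (lam₁ - lam₂), div_mul_cancel₀ _ hd⟩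
    have hTv1 : X₁ (T v) = lam₂ • T v - ((q - 1) * lam₂) • v := by
      have h := LinearMap.congr_fun h1 v
      rw [Module.End.mul_apply, LinearMap.sub_apply, Module.End.mul_apply,
        LinearMap.smul_apply, hv₂, map_smul, smul_smul, mul_comm] at h
      rw [h, mul_comm]
    have hTv2 : X₂ (T v) = lam₁ • T v + ((q - 1) * lam₂) • v := by
      have h := LinearMap.congr_fun h2 v
      rw [Module.End.mul_apply, LinearMap.add_apply, Module.End.mul_apply,
        LinearMap.smul_apply, hv₁, hv₂, map_smul, smul_smul, mul_comm] at h
      rw [h, mul_comm]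
    refine ⟨T v + c • v, ?_, ?_, ?_⟩
    · intro hw
      have hTveq : T v = (-c) • v := by
        rw [neg_smul]
        exact eq_neg_of_add_eq_zero_left hw
      have h30 := LinearMap.congr_fun h3 v
      have hscal : ((1 - c) * (-c - q)) • v = 0 := by
        simp only [Module.End.mul_apply, LinearMap.add_apply, LinearMap.sub_apply,
          LinearMap.smul_apply, Module.End.one_apply, LinearMap.zero_apply, map_add, map_smul,
          hTveq, smul_smul] at h30
        linear_combination (norm := module) h30
      rcases smul_eq_zero.mp hscal with hs | hs
      · rcases mul_eq_zero.mp hs with hs | hs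
        · have hc1 : c = 1 := by linear_combination -hs
          rw [hc1, one_mul] at hckey
          exact hne₁ (by linear_combination hckey)
        · have hcq : c = -q := by linear_combination -hs
          rw [hcq] at hckey
          have hql : q * lam₁ = lam₂ := by linear_combination -hckey
          apply hne₂
          field_simp
          linear_combination hql
      · exact hv hs
    · rw [map_add, map_smul, hTv1, hv₁, smul_add]
      linear_combination (norm := module) hckey • v
    · rw [map_add, map_smul, hTv2, hv₂, smul_add]
      linear_combination (norm := module) hckey • (-v)
end

section
/- Let v be a simultaneous eigenvector as above, with X₁v = λ₁v, X₂v = λ₂v where λ₁ ≠ q^{±1}λ₂ and λ₁λ₂ ≠ 0. Then the vector w = (q-1)λ₂·v + (λ₁ - λ₂)·T(v) satisfies X₁w = λ₂w and X₂w = λ₁w, and moreover w ≠ 0. -/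
/-- In the setting of the rank-2 affine Hecke relations, if `v` is a
simultaneous eigenvector with `X₁v = λ₁v`, `X₂v = λ₂v`, where `λ₁ ≠ q^{±1}λ₂` and
`λ₁λ₂ ≠ 0`, then the vector `w = (q-1)λ₂·v + (λ₁-λ₂)·T(v)` satisfies `X₁w = λ₂w`,
`X₂w = λ₁w`, and moreover `w ≠ 0`. -/
theorem hecke_rank_two_explicit_eigenvector
    (k V : Type*) [Field k] [AddCommGroup V] [Module k V]
    (q : k) (hq0 : q ≠ 0) (hq1 : q ≠ 1)
    (X₁ X₂ T : Module.End k V)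
    (h1 : X₁ * T = T * X₂ - (q - 1) • X₂)
    (h2 : X₂ * T = T * X₁ + (q - 1) • X₂)
    (h3 : (T - q • (1 : Module.End k V)) * (T + 1) = 0)
    (h4 : X₁ * X₂ = X₂ * X₁)
    (lam₁ lam₂ : k) (hl₁ : lam₁ ≠ 0) (hl₂ : lam₂ ≠ 0)
    (hne₁ : lam₁ ≠ q * lam₂) (hne₂ : lam₁ ≠ q⁻¹ * lam₂)
    (v : V) (hv : v ≠ 0) (hv₁ : X₁ v = lam₁ • v) (hv₂ : X₂ v = lam₂ • v) :
    X₁ (((q - 1) * lam₂) • v + (lam₁ - lam₂) • T v)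
        = lam₂ • (((q - 1) * lam₂) • v + (lam₁ - lam₂) • T v) ∧
    X₂ (((q - 1) * lam₂) • v + (lam₁ - lam₂) • T v)
        = lam₁ • (((q - 1) * lam₂) • v + (lam₁ - lam₂) • T v) ∧
    ((q - 1) * lam₂) • v + (lam₁ - lam₂) • T v ≠ 0 := by
  have e1 := DFunLike.congr_fun h1 v
  have e2 := DFunLike.congr_fun h2 v
  simp only [Module.End.mul_apply, LinearMap.sub_apply, LinearMap.add_apply,
    LinearMap.smul_apply, hv₁, hv₂, map_smul] at e1 e2
  -- e1 : X₁ (T v) = lam₂ • T v - (q-1) • lam₂ • v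
  -- e2 : X₂ (T v) = lam₁ • T v + (q-1) • lam₂ • v
  refine ⟨?_, ?_, ?_⟩
  · rw [map_add, map_smul, map_smul, hv₁, e1]
    module
  · rw [map_add, map_smul, map_smul, hv₂, e2]
    module
  · intro hw0
    by_cases hll : lam₁ = lam₂
    · rw [hll, sub_self, zero_smul, add_zero, smul_eq_zero] at hw0
      rcases hw0 with h | h
      · exact (mul_ne_zero (sub_ne_zero.mpr hq1) hl₂) h
      · exact hv h
    · have ha : lam₁ - lam₂ ≠ 0 := sub_ne_zero.mpr hll
      obtain ⟨c, hTv⟩ : ∃ c : k, T v = c • v := by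
        refine ⟨(lam₁ - lam₂)⁻¹ * (-((q - 1) * lam₂)), ?_⟩
        have h : (lam₁ - lam₂) • T v = (-((q - 1) * lam₂)) • v := by
          rw [neg_smul]
          linear_combination (norm := module) hw0
        calc T v = (lam₁ - lam₂)⁻¹ • ((lam₁ - lam₂) • T v) := by
              rw [smul_smul, inv_mul_cancel₀ ha, one_smul]
          _ = _ := by rw [h, smul_smul]
      have hceq : (q - 1) * lam₂ + (lam₁ - lam₂) * c = 0 := by
        rw [hTv] at hw0
        have h : ((q - 1) * lam₂ + (lam₁ - lam₂) * c) • v = 0 := by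
          linear_combination (norm := module) hw0
        rcases smul_eq_zero.mp h with h | h
        · exact h
        · exact absurd h hv
      have e3 := DFunLike.congr_fun h3 v
      simp only [Module.End.mul_apply, LinearMap.sub_apply, LinearMap.add_apply,
        LinearMap.smul_apply, Module.End.one_apply, LinearMap.zero_apply, map_add,
        hTv, map_smul, smul_smul] at e3
      have e4 : ((c - q) * (c + 1)) • v = (0 : V) := by
        linear_combination (norm := module) e3
      have e5 : (c - q) * (c + 1) = 0 := by
        by_contra h
        exact hv (by simpa [smul_eq_zero, h] using e4)
      rcases mul_eq_zero.mp e5 with h | h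
      · -- c = q : lam₁ = q⁻¹ lam₂
        have hcq : c = q := sub_eq_zero.mp h
        rw [hcq] at hceq
        apply hne₂
        field_simp
        linear_combination hceq
      · -- c = -1 : lam₁ = q lam₂
        have hcq : c = -1 := eq_neg_of_add_eq_zero_left h
        rw [hcq] at hceq
        apply hne₁
        linear_combination -hceq
end

section
/- Let a,b be positive integers with a+b = d, and let w_{a,b} ∈ 𝔖_d be the permutation sending i to i+b for 1 ≤ i ≤ a and i to i-a for a < i ≤ d. If f ∈ k[y₁,…,y_d] is invariant under 𝔖_a × 𝔖_b (acting on the first a and last b variables), then D_{a,b}(f) := ∂_{w_{a,b}}(f) is invariant under all of 𝔖_d. -/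
/-!
Since adjacent transpositions generate `𝔖_d`, it suffices to show that `g = ∂_w f`,
`w = w_{a,b}`, is fixed by every `s = s_i`, i.e. that `∂_s g = 0` or that `g` lies in the
image of `∂_s`. If `s` is a left descent of `w` (this happens only for `s = s_b`), then
`∂_w = ∂_s ∂_{s w}`, so `g` is in the image of `∂_s`. Otherwise `s w = w s'` for an adjacent
transposition `s'` of `𝔖_a × 𝔖_b`, both products being length-additive, so
`∂_s ∂_w f = ∂_w ∂_{s'} f = 0` because `f` is `s'`-invariant.
-/

open MvPolynomial Equiv

/-- Number of inversions of a permutation of `Fin d`; this is the Coxeter length. -/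
def coxLen {d : ℕ} (σ : Equiv.Perm (Fin d)) : ℕ :=
  (Finset.univ.filter fun p : Fin d × Fin d => p.1 < p.2 ∧ σ p.2 < σ p.1).card

/-- The block embedding `𝔖_a × 𝔖_b → 𝔖_{a+b}` (acting on the first `a` and last `b` letters). -/
def blockPerm {a b : ℕ} (σ : Equiv.Perm (Fin a)) (τ : Equiv.Perm (Fin b)) :
    Equiv.Perm (Fin (a + b)) :=
  (Equiv.permCongr finSumFinEquiv) (Equiv.sumCongr σ τ)

/-- The permutation `w_{a,b} ∈ 𝔖_{a+b}` sending `i ↦ i + b` for `i < a` and `i ↦ i - a`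
for `a ≤ i < a+b` (0-based indexing). -/
def wSh (a b : ℕ) : Equiv.Perm (Fin (a + b)) :=
  (finAddFlip : Fin (a + b) ≃ Fin (b + a)).trans (finCongr (Nat.add_comm b a))

lemma swap_apply_lt_swap_apply_iff {d : ℕ} {c c' m n : Fin d} (hc : (c : ℕ) + 1 = c')
    (h : ¬(m = c ∧ n = c')) (h' : ¬(m = c' ∧ n = c)) :
    swap c c' m < swap c c' n ↔ m < n := by
  simp only [Fin.ext_iff, not_and] at h h'
  rw [Fin.lt_def, Fin.lt_def, swap_apply_def, swap_apply_def]
  split_ifs <;> simp only [Fin.ext_iff] at * <;> omega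

def inversions {d : ℕ} (σ : Perm (Fin d)) : Finset (Fin d × Fin d) :=
  Finset.univ.filter fun p => p.1 < p.2 ∧ σ p.2 < σ p.1

lemma coxLen_eq_card_inversions {d : ℕ} (σ : Perm (Fin d)) :
    coxLen σ = (inversions σ).card :=
  rfl

lemma inversions_swap_mul {d : ℕ} {c c' : Fin d} (hc : (c : ℕ) + 1 = c') {u : Perm (Fin d)}
    {p q : Fin d} (hpq : p < q) (hp : u p = c) (hq : u q = c') :
    inversions (swap c c' * u) = insert (p, q) (inversions u) := by
  ext ⟨x, y⟩
  simp only [inversions, Finset.mem_insert, Finset.mem_filter, Finset.mem_univ, true_and,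
    Prod.mk.injEq]
  by_cases hxy : x = p ∧ y = q
  · obtain ⟨rfl, rfl⟩ := hxy
    simp only [hpq, Perm.mul_apply, hp, hq, swap_apply_left, swap_apply_right, and_self,
      true_and, true_or, iff_true]
    exact Fin.lt_def.2 (by omega)
  · simp only [hxy, false_or]
    refine and_congr_right fun hlt => swap_apply_lt_swap_apply_iff hc ?_ ?_
    · rintro ⟨hy, hx⟩
      obtain rfl := u.injective (hy.trans hp.symm)
      obtain rfl := u.injective (hx.trans hq.symm)
      exact lt_asymm hpq hlt
    · rintro ⟨hy, hx⟩
      exact hxy ⟨u.injective (hx.trans hp.symm), u.injective (hy.trans hq.symm)⟩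

lemma coxLen_swap_mul {d : ℕ} {c c' : Fin d} (hc : (c : ℕ) + 1 = c') {u : Perm (Fin d)}
    {p q : Fin d} (hpq : p < q) (hp : u p = c) (hq : u q = c') :
    coxLen (swap c c' * u) = coxLen u + 1 := by
  have hpq_mem : (p, q) ∉ inversions u := by
    simp only [inversions, Finset.mem_filter, Finset.mem_univ, true_and, hp, hq, not_and, not_lt]
    exact fun _ => Fin.le_def.2 (by omega)
  rw [coxLen_eq_card_inversions, inversions_swap_mul hc hpq hp hq,
    Finset.card_insert_of_notMem hpq_mem, coxLen_eq_card_inversions]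

lemma coxLen_one {d : ℕ} : coxLen (1 : Perm (Fin d)) = 0 := by
  rw [coxLen_eq_card_inversions, Finset.card_eq_zero, inversions, Finset.filter_eq_empty_iff]
  exact fun _ _ h => lt_asymm h.1 h.2

lemma coxLen_swap {d : ℕ} {c c' : Fin d} (hc : (c : ℕ) + 1 = c') : coxLen (swap c c') = 1 := by
  simpa [coxLen_one] using
    coxLen_swap_mul hc (u := 1) (p := c) (q := c') (Fin.lt_def.2 (by omega)) rfl rfl

lemma MvPolynomial.isSymmetric_of_rename_swap {R : Type*} [CommSemiring R] {d : ℕ}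
    {φ : MvPolynomial (Fin d) R} (h : ∀ i j : Fin d, (i : ℕ) + 1 = j → rename (swap i j) φ = φ) :
    φ.IsSymmetric := by
  intro ρ
  cases d with
  | zero => rw [Subsingleton.elim ρ 1, Perm.coe_one, rename_id_apply]
  | succ n =>
    induction (Perm.mclosure_swap_castSucc_succ n).ge (Submonoid.mem_top ρ)
      using Submonoid.closure_induction with
    | mem _ hs =>
      obtain ⟨i, rfl⟩ := hs
      exact h _ _ (by simp)
    | one => rw [Perm.coe_one, rename_id_apply]
    | mul σ τ _ _ hσ hτ => rw [Perm.coe_mul, ← rename_rename, hτ, hσ]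

lemma MvPolynomial.X_sub_X_ne_zero {σ R : Type*} [CommRing R] [Nontrivial R] {i j : σ}
    (hij : i ≠ j) : (X i - X j : MvPolynomial σ R) ≠ 0 :=
  sub_ne_zero.2 fun h => hij (X_injective h)

section DividedDifference

variable {σ R : Type*} [CommRing R] [DecidableEq σ]

def IsDividedDifference (i j : σ) (T : MvPolynomial σ R → MvPolynomial σ R) : Prop :=
  ∀ g, (X i - X j) * T g = g - rename (swap i j) g

variable [IsDomain R] {i j : σ} {T : MvPolynomial σ R → MvPolynomial σ R}

lemma IsDividedDifference.rename_swap_apply (hT : IsDividedDifference i j T) (hij : i ≠ j)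
    (g : MvPolynomial σ R) : rename (swap i j) (T g) = T g := by
  have hg := congrArg (rename (swap i j)) (hT g)
  simp only [map_mul, map_sub, rename_X, swap_apply_left, swap_apply_right, rename_rename,
    ← Perm.coe_mul, swap_mul_self, Perm.coe_one, rename_id_apply] at hg
  refine mul_left_cancel₀ (X_sub_X_ne_zero hij) ?_
  linear_combination -hg - hT g

lemma IsDividedDifference.apply_eq_zero_iff (hT : IsDividedDifference i j T) (hij : i ≠ j)
    {g : MvPolynomial σ R} : T g = 0 ↔ rename (swap i j) g = g := by
  rw [← mul_right_inj' (X_sub_X_ne_zero hij), hT, mul_zero, sub_eq_zero, eq_comm]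

end DividedDifference

structure IsDemazureFamily {R : Type*} [CommRing R] {d : ℕ}
    (D : Perm (Fin d) → Module.End R (MvPolynomial (Fin d) R)) : Prop where
  isDividedDifference_swap :
    ∀ i j : Fin d, (i : ℕ) + 1 = j → IsDividedDifference i j (D (swap i j))
  map_mul : ∀ u v, coxLen (u * v) = coxLen u + coxLen v → D (u * v) = D u * D v

namespace IsDemazureFamily

variable {R : Type*} [CommRing R] [IsDomain R] {d : ℕ}
  {D : Perm (Fin d) → Module.End R (MvPolynomial (Fin d) R)}

lemma rename_swap_apply_of_inversion (hD : IsDemazureFamily D) {i j : Fin d}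
    (hij : (i : ℕ) + 1 = j) {u : Perm (Fin d)} {p q : Fin d} (hpq : p < q) (hp : u p = j)
    (hq : u q = i) (g : MvPolynomial (Fin d) R) : rename (swap i j) (D u g) = D u g := by
  set v := swap i j * u
  have hu : swap i j * v = u := swap_mul_self_mul i j u
  have hlen : coxLen (swap i j * v) = coxLen (swap i j) + coxLen v := by
    rw [coxLen_swap_mul hij hpq (by simp [v, hp]) (by simp [v, hq]), coxLen_swap hij, add_comm]
  rw [← hu, hD.map_mul _ _ hlen, Module.End.mul_apply]
  exact (hD.isDividedDifference_swap i j hij).rename_swap_apply (by rintro rfl; omega) _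

lemma rename_swap_apply_of_conj (hD : IsDemazureFamily D) {i j : Fin d}
    (hij : (i : ℕ) + 1 = j) {u : Perm (Fin d)} {p q : Fin d} (hpq : (p : ℕ) + 1 = q)
    (hp : u p = i) (hq : u q = j) {g : MvPolynomial (Fin d) R}
    (hg : rename (swap p q) g = g) : rename (swap i j) (D u g) = D u g := by
  have hconj : swap i j * u = u * swap p q := by
    rw [← hp, ← hq, swap_apply_apply, inv_mul_cancel_right]
  have hlen : coxLen (swap i j * u) = coxLen u + 1 :=
    coxLen_swap_mul hij (Fin.lt_def.2 (by omega)) hp hq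
  have hcomm : D (swap i j) * D u = D u * D (swap p q) := by
    rw [← hD.map_mul, ← hD.map_mul, hconj]
    · rw [← hconj, hlen, coxLen_swap hpq]
    · rw [hlen, coxLen_swap hij, add_comm]
  rw [← (hD.isDividedDifference_swap i j hij).apply_eq_zero_iff (by rintro rfl; omega),
    ← Module.End.mul_apply, hcomm, Module.End.mul_apply,
    ((hD.isDividedDifference_swap p q hpq).apply_eq_zero_iff (by rintro rfl; omega)).2 hg,
    map_zero]

end IsDemazureFamily

lemma blockPerm_swap_one {a b : ℕ} (i j : Fin a) :
    blockPerm (swap i j) (1 : Perm (Fin b)) = swap (Fin.castAdd b i) (Fin.castAdd b j) := by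
  rw [blockPerm, show sumCongr (swap i j) (1 : Perm (Fin b)) = swap (.inl i) (.inl j) from
    Perm.sumCongr_swap_one i j, permCongr_def, symm_trans_swap_trans, finSumFinEquiv_apply_left,
    finSumFinEquiv_apply_left]

lemma blockPerm_one_swap {a b : ℕ} (i j : Fin b) :
    blockPerm (1 : Perm (Fin a)) (swap i j) = swap (Fin.natAdd a i) (Fin.natAdd a j) := by
  rw [blockPerm, show sumCongr (1 : Perm (Fin a)) (swap i j) = swap (.inr i) (.inr j) from
    Perm.sumCongr_one_swap i j, permCongr_def, symm_trans_swap_trans, finSumFinEquiv_apply_right,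
    finSumFinEquiv_apply_right]

lemma val_wSh_castAdd {a b : ℕ} (x : Fin a) : (wSh a b (Fin.castAdd b x) : ℕ) = x + b := by
  simp [wSh]

lemma val_wSh_natAdd {a b : ℕ} (y : Fin b) : (wSh a b (Fin.natAdd a y) : ℕ) = y := by
  simp [wSh]

lemma exists_wSh_inversion {a b : ℕ} {i j : Fin (a + b)} (hij : (i : ℕ) + 1 = j)
    (hib : (i : ℕ) + 1 = b) : ∃ p q, p < q ∧ wSh a b p = j ∧ wSh a b q = i := by
  refine ⟨Fin.castAdd b ⟨0, by omega⟩, Fin.natAdd a ⟨b - 1, by omega⟩, Fin.lt_def.2 ?_,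
    Fin.ext ?_, Fin.ext ?_⟩ <;> simp only [Fin.val_castAdd, Fin.val_natAdd, val_wSh_castAdd,
    val_wSh_natAdd] <;> omega

lemma exists_wSh_conj_swap_eq_blockPerm {a b : ℕ} {i j : Fin (a + b)} (hij : (i : ℕ) + 1 = j)
    (hib : (i : ℕ) + 1 ≠ b) : ∃ p q : Fin (a + b), (p : ℕ) + 1 = q ∧ wSh a b p = i ∧
      wSh a b q = j ∧ ∃ σ τ, blockPerm σ τ = swap p q := by
  rcases lt_or_gt_of_ne hib with hlt | hgt
  · refine ⟨Fin.natAdd a ⟨i, by omega⟩, Fin.natAdd a ⟨i + 1, hlt⟩, by simp [add_assoc],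
      Fin.ext ?_, Fin.ext ?_, 1, swap ⟨i, by omega⟩ ⟨i + 1, hlt⟩, blockPerm_one_swap _ _⟩ <;>
      simp only [val_wSh_natAdd, hij]
  · refine ⟨Fin.castAdd b ⟨i - b, by omega⟩, Fin.castAdd b ⟨i - b + 1, by omega⟩, by simp,
      Fin.ext ?_, Fin.ext ?_, swap _ _, 1, blockPerm_swap_one _ _⟩ <;>
      simp only [val_wSh_castAdd] <;> omega

theorem demazure_shuffle_of_block_invariant_is_symmetric_general
    (k : Type*) [Field k] (a b : ℕ)
    (D : Equiv.Perm (Fin (a + b)) → Module.End k (MvPolynomial (Fin (a + b)) k))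
    (hswap : ∀ i j : Fin (a + b), (i : ℕ) + 1 = (j : ℕ) → ∀ f,
      (X i - X j) * D (Equiv.swap i j) f = f - rename (Equiv.swap i j) f)
    (hmul : ∀ u v : Equiv.Perm (Fin (a + b)),
      coxLen (u * v) = coxLen u + coxLen v → D (u * v) = D u * D v)
    (f : MvPolynomial (Fin (a + b)) k)
    (hf : ∀ (σ : Equiv.Perm (Fin a)) (τ : Equiv.Perm (Fin b)),
      rename (blockPerm σ τ) f = f) :
    ∀ ρ : Equiv.Perm (Fin (a + b)), rename ρ (D (wSh a b) f) = D (wSh a b) f := by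
  have hD : IsDemazureFamily D := ⟨hswap, hmul⟩
  refine isSymmetric_of_rename_swap fun i j hij => ?_
  by_cases hib : (i : ℕ) + 1 = b
  · obtain ⟨p, q, hpq, hp, hq⟩ := exists_wSh_inversion hij hib
    exact hD.rename_swap_apply_of_inversion hij hpq hp hq f
  · obtain ⟨p, q, hpq, hp, hq, σ, τ, hστ⟩ := exists_wSh_conj_swap_eq_blockPerm hij hib
    exact hD.rename_swap_apply_of_conj hij hpq hp hq (hστ ▸ hf σ τ)

/-- Let `a, b` be positive integers with `a + b = d`, and `D` the family of
Demazure operators on `k[y₁,…,y_d]` (with `D w` given by composing along any reduced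
expression of `w`). If `f` is invariant under the Young subgroup `𝔖_a × 𝔖_b`, then
`D_{a,b}(f) = ∂_{w_{a,b}}(f)` is invariant under all of `𝔖_d`. -/
theorem demazure_shuffle_of_block_invariant_is_symmetric
    (k : Type*) [Field k] (a b : ℕ) (ha : 0 < a) (hb : 0 < b)
    (D : Equiv.Perm (Fin (a + b)) → Module.End k (MvPolynomial (Fin (a + b)) k))
    (hone : D 1 = 1)
    (hswap : ∀ i j : Fin (a + b), (i : ℕ) + 1 = (j : ℕ) → ∀ f,
      (X i - X j) * D (Equiv.swap i j) f = f - rename (Equiv.swap i j) f)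
    (hmul : ∀ u v : Equiv.Perm (Fin (a + b)),
      coxLen (u * v) = coxLen u + coxLen v → D (u * v) = D u * D v)
    (f : MvPolynomial (Fin (a + b)) k)
    (hf : ∀ (σ : Equiv.Perm (Fin a)) (τ : Equiv.Perm (Fin b)),
      rename (blockPerm σ τ) f = f) :
    ∀ ρ : Equiv.Perm (Fin (a + b)), rename ρ (D (wSh a b) f) = D (wSh a b) f :=
  demazure_shuffle_of_block_invariant_is_symmetric_general k a b D hswap hmul f hf
end

section
/- For positive integers a, b with a+b = d, any f ∈ k[y₁,…,y_d] invariant under 𝔖_a × 𝔖_b, and any g ∈ k[y₁,…,y_d], the Demazure operators satisfy D_a D_b^{+a}(f · D_{b,a}(g)) = f · D_aD_b^{+a}D_{b,a}(g) = f·D_{a+b}(g); that is, a polynomial f symmetric in the first a and last b variables can be pulled out of D_a D_b^{+a}, and D_aD_b^{+a}D_{b,a} = D_{a+b}. -/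
open MvPolynomial Equiv

/-- The permutation `w_{b,a} ∈ 𝔖_{a+b}` sending `i ↦ i + a` for `i < b` and `i ↦ i - b`
for `b ≤ i < a+b` (0-based indexing). -/
def wShRev (a b : ℕ) : Equiv.Perm (Fin (a + b)) :=
  (finCongr (Nat.add_comm a b) : Fin (a + b) ≃ Fin (b + a)).trans
    (finAddFlip : Fin (b + a) ≃ Fin (a + b))

section Aux

variable {a b : ℕ}

lemma blockPerm_castAdd (σ : Perm (Fin a)) (τ : Perm (Fin b)) (x : Fin a) :
    blockPerm σ τ (Fin.castAdd b x) = Fin.castAdd b (σ x) := by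
  simp [blockPerm, Equiv.permCongr_apply, finSumFinEquiv_symm_apply_castAdd,
    finSumFinEquiv_apply_left]

lemma blockPerm_natAdd (σ : Perm (Fin a)) (τ : Perm (Fin b)) (x : Fin b) :
    blockPerm σ τ (Fin.natAdd a x) = Fin.natAdd a (τ x) := by
  simp [blockPerm, Equiv.permCongr_apply, finSumFinEquiv_symm_apply_natAdd,
    finSumFinEquiv_apply_right]

lemma blockPerm_val (σ : Perm (Fin a)) (τ : Perm (Fin b)) (i : Fin (a + b)) :
    ((blockPerm σ τ i : Fin (a + b)) : ℕ)
      = if h : (i : ℕ) < a then (σ ⟨i, h⟩ : ℕ)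
        else a + (τ ⟨(i : ℕ) - a, by omega⟩ : ℕ) := by
  by_cases h : (i : ℕ) < a
  · have : i = Fin.castAdd b ⟨(i : ℕ), h⟩ := by apply Fin.ext; simp
    rw [this, blockPerm_castAdd]
    simp [h]
  · have hge : a ≤ (i : ℕ) := Nat.le_of_not_lt h
    have : i = Fin.natAdd a ⟨(i : ℕ) - a, by omega⟩ := by apply Fin.ext; simp; omega
    rw [this, blockPerm_natAdd]
    simp [h]

lemma blockPerm_mul (σ σ' : Perm (Fin a)) (τ τ' : Perm (Fin b)) :
    blockPerm σ τ * blockPerm σ' τ' = blockPerm (σ * σ') (τ * τ') := by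
  apply Equiv.ext
  intro i
  induction i using Fin.addCases with
  | left x => simp [Perm.mul_apply, blockPerm_castAdd]
  | right x => simp [Perm.mul_apply, blockPerm_natAdd]

lemma blockPerm_one : blockPerm (1 : Perm (Fin a)) (1 : Perm (Fin b)) = 1 := by
  apply Equiv.ext
  intro i
  induction i using Fin.addCases with
  | left x => simp [blockPerm_castAdd]
  | right x => simp [blockPerm_natAdd]

lemma blockPerm_inv (σ : Perm (Fin a)) (τ : Perm (Fin b)) :
    (blockPerm σ τ)⁻¹ = blockPerm σ⁻¹ τ⁻¹ :=
  inv_eq_of_mul_eq_one_right (by rw [blockPerm_mul, mul_inv_cancel, mul_inv_cancel, blockPerm_one])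

lemma wShRev_val (i : Fin (a + b)) :
    ((wShRev a b i : Fin (a + b)) : ℕ) = if (i : ℕ) < b then a + i else (i : ℕ) - b := by
  by_cases h : (i : ℕ) < b
  · have : (finCongr (Nat.add_comm a b) i : Fin (b + a)) = Fin.castAdd a ⟨(i : ℕ), h⟩ := by
      apply Fin.ext; simp
    simp [wShRev, Equiv.trans_apply, this, finAddFlip_apply_castAdd, h, Nat.add_comm]
  · have hge : b ≤ (i : ℕ) := Nat.le_of_not_lt h
    have : (finCongr (Nat.add_comm a b) i : Fin (b + a)) = Fin.natAdd b ⟨(i : ℕ) - b, by omega⟩ := by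
      apply Fin.ext; simp; omega
    simp [wShRev, Equiv.trans_apply, this, finAddFlip_apply_natAdd, h]

lemma swap_castAdd (x y : Fin a) :
    Equiv.swap (Fin.castAdd b x) (Fin.castAdd b y) = blockPerm (Equiv.swap x y) 1 := by
  apply Equiv.ext
  intro i
  induction i using Fin.addCases with
  | left z =>
    rw [blockPerm_castAdd]
    exact (Fin.castAdd_injective a b).swap_apply x y z
  | right z =>
    rw [blockPerm_natAdd]
    have h1 : Fin.natAdd a z ≠ Fin.castAdd b x := by
      intro h; have := congrArg Fin.val h; simp at this; omega
    have h2 : Fin.natAdd a z ≠ Fin.castAdd b y := by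
      intro h; have := congrArg Fin.val h; simp at this; omega
    rw [Equiv.swap_apply_of_ne_of_ne h1 h2]
    simp

lemma swap_natAdd (x y : Fin b) :
    Equiv.swap (Fin.natAdd a x) (Fin.natAdd a y) = blockPerm 1 (Equiv.swap x y) := by
  apply Equiv.ext
  intro i
  induction i using Fin.addCases with
  | left z =>
    rw [blockPerm_castAdd]
    have h1 : Fin.castAdd b z ≠ Fin.natAdd a x := by
      intro h; have := congrArg Fin.val h; simp at this; omega
    have h2 : Fin.castAdd b z ≠ Fin.natAdd a y := by
      intro h; have := congrArg Fin.val h; simp at this; omega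
    rw [Equiv.swap_apply_of_ne_of_ne h1 h2]
    simp
  | right z =>
    rw [blockPerm_natAdd]
    have hinj : Function.Injective (Fin.natAdd a : Fin b → Fin (a + b)) := by
      intro u v h
      have := congrArg Fin.val h
      simp at this
      exact Fin.ext this
    exact hinj.swap_apply x y z

lemma finStrictMono_le_apply {n : ℕ} {f : Fin n → Fin n} (h : StrictMono f) (x : Fin n) :
    x ≤ f x := by
  have hw : WellFoundedLT (Fin n) := inferInstance
  exact @StrictMono.le_apply (Fin n) inferInstance hw f h x

lemma coxLen_mul_add {n : ℕ} (u v : Perm (Fin n))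
    (H : ∀ p q : Fin n, p < q → v q < v p → u (v q) < u (v p)) :
    coxLen (u * v) = coxLen u + coxLen v := by
  classical
  have hsplit : (Finset.univ.filter fun p : Fin n × Fin n =>
        p.1 < p.2 ∧ (u * v) p.2 < (u * v) p.1)
      = (Finset.univ.filter fun p : Fin n × Fin n =>
          p.1 < p.2 ∧ v p.1 < v p.2 ∧ u (v p.2) < u (v p.1))
        ∪ (Finset.univ.filter fun p : Fin n × Fin n => p.1 < p.2 ∧ v p.2 < v p.1) := by
    ext ⟨p, q⟩
    simp only [Finset.mem_filter, Finset.mem_union, Finset.mem_univ, true_and]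
    simp only [Perm.mul_apply]
    constructor
    · rintro ⟨hpq, huv⟩
      rcases lt_trichotomy (v p) (v q) with h | h | h
      · exact Or.inl ⟨hpq, h, huv⟩
      · exact absurd (v.injective h) (ne_of_lt hpq)
      · exact Or.inr ⟨hpq, h⟩
    · rintro (⟨hpq, hv, hu⟩ | ⟨hpq, hv⟩)
      · exact ⟨hpq, hu⟩
      · exact ⟨hpq, H p q hpq hv⟩
  have hdis : Disjoint
      (Finset.univ.filter fun p : Fin n × Fin n =>
        p.1 < p.2 ∧ v p.1 < v p.2 ∧ u (v p.2) < u (v p.1))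
      (Finset.univ.filter fun p : Fin n × Fin n => p.1 < p.2 ∧ v p.2 < v p.1) := by
    rw [Finset.disjoint_filter]
    rintro ⟨p, q⟩ _ ⟨_, hv, _⟩ ⟨_, hv'⟩
    exact absurd hv (not_lt_of_gt hv')
  unfold coxLen
  rw [hsplit, Finset.card_union_of_disjoint hdis]
  congr 1
  apply Finset.card_bij (fun p _ => (v p.1, v p.2))
  · rintro ⟨p, q⟩ hm
    simp only [Finset.mem_filter, Finset.mem_univ, true_and] at hm ⊢
    exact ⟨hm.2.1, hm.2.2⟩
  · rintro ⟨p, q⟩ _ ⟨p', q'⟩ _ h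
    simp only [Prod.mk.injEq] at h
    exact Prod.ext (v.injective h.1) (v.injective h.2)
  · rintro ⟨x, y⟩ hm
    simp only [Finset.mem_filter, Finset.mem_univ, true_and] at hm
    obtain ⟨hxy, hu⟩ := hm
    have hne : v⁻¹ x ≠ v⁻¹ y := fun e => (ne_of_lt hxy) (by
      have := congrArg v e; simpa using this)
    rcases lt_or_gt_of_ne hne with hlt | hgt
    · refine ⟨(v⁻¹ x, v⁻¹ y), ?_, ?_⟩
      · simp only [Finset.mem_filter, Finset.mem_univ, true_and, Perm.coe_inv, apply_symm_apply]
        exact ⟨hlt, hxy, hu⟩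
      · simp [Perm.coe_inv, apply_symm_apply]
    · exfalso
      have := H (v⁻¹ y) (v⁻¹ x) hgt (by simpa [Perm.coe_inv, apply_symm_apply] using hxy)
      simp only [Perm.coe_inv, apply_symm_apply] at this
      exact absurd hu (not_lt_of_gt this)

lemma coxLen_eq_zero {n : ℕ} {w : Perm (Fin n)} (h : coxLen w = 0) : w = 1 := by
  classical
  have hmono : StrictMono (w : Fin n → Fin n) := by
    intro p q hpq
    rcases lt_trichotomy (w p) (w q) with h' | h' | h'
    · exact h'
    · exact absurd (w.injective h') (ne_of_lt hpq)
    · exfalso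
      have : ((p, q) : Fin n × Fin n) ∈
          (Finset.univ.filter fun p : Fin n × Fin n => p.1 < p.2 ∧ w p.2 < w p.1) := by
        simp [hpq, h']
      rw [Finset.card_eq_zero.mp h] at this
      exact absurd this (Finset.notMem_empty _)
  apply Equiv.ext
  intro i
  have h1 : ∀ j : Fin n, j ≤ w j := fun j => finStrictMono_le_apply hmono j
  have h2 : w i ≤ i := by
    have hmono' : StrictMono ⇑(w⁻¹ : Perm (Fin n)) := by
      intro p q hpq
      rcases lt_trichotomy (w⁻¹ p) (w⁻¹ q) with h' | h' | h'
      · exact h'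
      · exact absurd (w⁻¹.injective h') (ne_of_lt hpq)
      · have := hmono h'
        simp only [Perm.coe_inv, apply_symm_apply] at this
        exact absurd hpq (not_lt_of_gt this)
    have := finStrictMono_le_apply hmono' (w i)
    simpa using this
  simp only [Perm.one_apply]
  exact le_antisymm h2 (h1 i)

lemma swap_adj_lt {n : ℕ} {i j : Fin n} (hij : (i : ℕ) + 1 = (j : ℕ)) (x y : Fin n)
    (h1 : ¬(x = i ∧ y = j)) (h2 : ¬(x = j ∧ y = i)) :
    (Equiv.swap i j x < Equiv.swap i j y ↔ x < y) := by
  have key : ∀ z : Fin n, ((Equiv.swap i j z : Fin n) : ℕ)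
      = if (z : ℕ) = (i : ℕ) then (j : ℕ) else if (z : ℕ) = (j : ℕ) then (i : ℕ) else (z : ℕ) := by
    intro z
    rcases eq_or_ne ((z : Fin n) : ℕ) ((i : Fin n) : ℕ) with hzi | hzi
    · have : z = i := Fin.ext hzi
      subst this; simp
    · rcases eq_or_ne ((z : Fin n) : ℕ) ((j : Fin n) : ℕ) with hzj | hzj
      · have : z = j := Fin.ext hzj
        subst this; simp [Equiv.swap_apply_right, hzi]
      · rw [Equiv.swap_apply_of_ne_of_ne (Fin.ne_of_val_ne hzi) (Fin.ne_of_val_ne hzj)]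
        simp [hzi, hzj]
  simp only [not_and, Fin.ext_iff] at h1 h2
  rw [Fin.lt_def, Fin.lt_def, key x, key y]
  split_ifs <;> omega

lemma exists_descent {n : ℕ} {σ : Perm (Fin n)} (h : σ ≠ 1) :
    ∃ x y : Fin n, (x : ℕ) + 1 = (y : ℕ) ∧ σ⁻¹ y < σ⁻¹ x := by
  by_contra hc
  push_neg at hc
  apply h
  have hconsec : ∀ x y : Fin n, (x : ℕ) + 1 = (y : ℕ) → σ⁻¹ x < σ⁻¹ y := by
    intro x y hxy
    have hne : σ⁻¹ x ≠ σ⁻¹ y := fun e =>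
      Fin.ne_of_val_ne (by omega : (x : ℕ) ≠ (y : ℕ)) (σ⁻¹.injective e)
    exact lt_of_le_of_ne (hc x y hxy) hne
  have hmono : StrictMono ⇑(σ⁻¹ : Perm (Fin n)) := by
    have step : ∀ m : ℕ, ∀ x y : Fin n, (y : ℕ) = (x : ℕ) + (m + 1) → σ⁻¹ x < σ⁻¹ y := by
      intro m
      induction m with
      | zero => intro x y hxy; exact hconsec x y (by omega)
      | succ m ih =>
        intro x y hxy
        have hy : (y : ℕ) < n := y.isLt
        have hmid : ((⟨(x : ℕ) + (m + 1), by omega⟩ : Fin n) : ℕ) = (x : ℕ) + (m + 1) := rfl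
        exact lt_trans (ih x ⟨(x : ℕ) + (m + 1), by omega⟩ rfl)
          (hconsec _ y (by simp [hmid]; omega))
    intro p q hpq
    have : (q : ℕ) = (p : ℕ) + (((q : ℕ) - (p : ℕ) - 1) + 1) := by
      have := hpq; rw [Fin.lt_def] at this; omega
    exact step _ p q this
  have h1 : ∀ j : Fin n, j ≤ σ⁻¹ j := fun j => finStrictMono_le_apply hmono j
  have hmono' : StrictMono (σ : Fin n → Fin n) := by
    intro p q hpq
    rcases lt_trichotomy (σ p) (σ q) with h' | h' | h'
    · exact h'
    · exact absurd (σ.injective h') (ne_of_lt hpq)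
    · have := hmono h'
      simp only [Perm.coe_inv, symm_apply_apply] at this
      exact absurd hpq (not_lt_of_gt this)
  apply Equiv.ext
  intro i
  have h2 : σ i ≤ i := by
    have := h1 (σ i)
    simpa using this
  simp only [Perm.one_apply]
  exact le_antisymm h2 (finStrictMono_le_apply hmono' i)

lemma hyp1 (a b : ℕ) : ∀ p q : Fin (a + b), p < q →
    blockPerm (1 : Perm (Fin a)) (Fin.revPerm : Perm (Fin b)) q < blockPerm 1 Fin.revPerm p →
    blockPerm (Fin.revPerm : Perm (Fin a)) (1 : Perm (Fin b)) (blockPerm 1 Fin.revPerm q)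
      < blockPerm Fin.revPerm 1 (blockPerm 1 Fin.revPerm p) := by
  intro p q hpq hlt
  have hp := p.isLt
  have hq := q.isLt
  rw [Fin.lt_def] at hpq hlt ⊢
  simp only [blockPerm_val, Perm.one_apply, Fin.revPerm_apply, Fin.val_rev] at hlt ⊢
  split_ifs at hlt ⊢ <;> omega

lemma hyp2 (a b : ℕ) : ∀ p q : Fin (a + b), p < q →
    wShRev a b q < wShRev a b p →
    blockPerm (Fin.revPerm : Perm (Fin a)) (Fin.revPerm : Perm (Fin b)) (wShRev a b q)
      < blockPerm Fin.revPerm Fin.revPerm (wShRev a b p) := by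
  intro p q hpq hlt
  have hp := p.isLt
  have hq := q.isLt
  rw [Fin.lt_def] at hpq hlt ⊢
  simp only [blockPerm_val, wShRev_val, Fin.revPerm_apply, Fin.val_rev] at hlt ⊢
  split_ifs at hlt ⊢ <;> omega

lemma comp_eq_rev (a b : ℕ) :
    blockPerm (Fin.revPerm : Perm (Fin a)) (Fin.revPerm : Perm (Fin b)) * wShRev a b
      = (Fin.revPerm : Perm (Fin (a + b))) := by
  apply Equiv.ext
  intro i
  apply Fin.ext
  have hi := i.isLt
  simp only [Perm.mul_apply, blockPerm_val, wShRev_val, Fin.revPerm_apply, Fin.val_rev]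
  split_ifs <;> omega

end Aux

/-- For positive integers `a, b` with `a + b = d`, any `f ∈ k[y₁,…,y_d]`
invariant under `𝔖_a × 𝔖_b` and any `g, h`:
(i) `f` can be pulled out of `D_a D_b^{+a}`, i.e. `D_aD_b^{+a}(f·h) = f·D_aD_b^{+a}(h)`; and
(ii) `D_a ∘ D_b^{+a} ∘ D_{b,a} = D_{a+b}` as operators.
(In particular `D_aD_b^{+a}(f·D_{b,a}(g)) = f·D_aD_b^{+a}D_{b,a}(g) = f·D_{a+b}(g)`.)
Here `D : 𝔖_{a+b} → End(k[y₁,…,y_d])` is the family of Demazure operators, given by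
composing the elementary Demazure operators along any reduced expression. -/
theorem demazure_pull_out_invariant_and_factorization
    (k : Type*) [Field k] (a b : ℕ) (ha : 0 < a) (hb : 0 < b)
    (D : Equiv.Perm (Fin (a + b)) → Module.End k (MvPolynomial (Fin (a + b)) k))
    (hone : D 1 = 1)
    (hswap : ∀ i j : Fin (a + b), (i : ℕ) + 1 = (j : ℕ) → ∀ f,
      (X i - X j) * D (Equiv.swap i j) f = f - rename (Equiv.swap i j) f)
    (hmul : ∀ u v : Equiv.Perm (Fin (a + b)),
      coxLen (u * v) = coxLen u + coxLen v → D (u * v) = D u * D v) :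
    (∀ f h : MvPolynomial (Fin (a + b)) k,
      (∀ (σ : Equiv.Perm (Fin a)) (τ : Equiv.Perm (Fin b)), rename (blockPerm σ τ) f = f) →
      (D (blockPerm Fin.revPerm 1) * D (blockPerm 1 Fin.revPerm)) (f * h)
        = f * (D (blockPerm Fin.revPerm 1) * D (blockPerm 1 Fin.revPerm)) h) ∧
    D (blockPerm Fin.revPerm 1) * D (blockPerm 1 Fin.revPerm) * D (wShRev a b)
      = D (Fin.revPerm : Equiv.Perm (Fin (a + b))) := by
  classical
  -- pulling an invariant polynomial out of an elementary Demazure operator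
  have pull : ∀ (i j : Fin (a + b)), (i : ℕ) + 1 = (j : ℕ) →
      ∀ f g : MvPolynomial (Fin (a + b)) k, rename (Equiv.swap i j) f = f →
      D (Equiv.swap i j) (f * g) = f * D (Equiv.swap i j) g := by
    intro i j hij f g hf
    have hne : (X i : MvPolynomial (Fin (a + b)) k) ≠ X j := by
      intro e
      have : i = j := MvPolynomial.X_injective e
      have := congrArg Fin.val this
      omega
    have hc : (X i - X j : MvPolynomial (Fin (a + b)) k) ≠ 0 := sub_ne_zero.mpr hne
    apply mul_left_cancel₀ hc
    rw [hswap i j hij (f * g), map_mul, hf, mul_left_comm, hswap i j hij g, mul_sub]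
  -- main induction: an invariant polynomial can be pulled out of `D (blockPerm σ τ)`
  have main : ∀ (n : ℕ) (σ : Perm (Fin a)) (τ : Perm (Fin b)),
      coxLen (blockPerm σ τ) = n →
      ∀ f g : MvPolynomial (Fin (a + b)) k,
      (∀ (σ' : Perm (Fin a)) (τ' : Perm (Fin b)), rename (blockPerm σ' τ') f = f) →
      D (blockPerm σ τ) (f * g) = f * D (blockPerm σ τ) g := by
    intro n
    induction n using Nat.strong_induction_on with
    | _ n IH =>
      intro σ τ hn f g hf
      by_cases h1 : blockPerm σ τ = 1
      · rw [h1, hone]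
        simp [Module.End.one_apply]
      · have hστ : σ ≠ 1 ∨ τ ≠ 1 := by
          by_contra hcon
          push_neg at hcon
          exact h1 (by rw [hcon.1, hcon.2, blockPerm_one])
        obtain ⟨i, j, σ₂, τ₂, hij, hfinv, hdesc, hsw⟩ :
            ∃ (i j : Fin (a + b)) (σ₂ : Perm (Fin a)) (τ₂ : Perm (Fin b)),
              (i : ℕ) + 1 = (j : ℕ) ∧ rename (Equiv.swap i j) f = f ∧
              (blockPerm σ τ)⁻¹ j < (blockPerm σ τ)⁻¹ i ∧
              Equiv.swap i j * blockPerm σ τ = blockPerm σ₂ τ₂ := by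
          rcases hστ with hσ | hτ
          · obtain ⟨x, y, hxy, hd⟩ := exists_descent hσ
            refine ⟨Fin.castAdd b x, Fin.castAdd b y, Equiv.swap x y * σ, τ,
              by simpa using hxy, ?_, ?_, ?_⟩
            · rw [swap_castAdd]; exact hf _ _
            · rw [blockPerm_inv, blockPerm_castAdd, blockPerm_castAdd]
              have hd' := hd
              rw [Fin.lt_def] at hd'
              rw [Fin.lt_def]
              simpa only [Fin.coe_castAdd] using hd'
            · rw [swap_castAdd, blockPerm_mul, one_mul]
          · obtain ⟨x, y, hxy, hd⟩ := exists_descent hτ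
            refine ⟨Fin.natAdd a x, Fin.natAdd a y, σ, Equiv.swap x y * τ,
              by simp; omega, ?_, ?_, ?_⟩
            · rw [swap_natAdd]; exact hf _ _
            · rw [blockPerm_inv, blockPerm_natAdd, blockPerm_natAdd]
              have hd' := hd
              rw [Fin.lt_def] at hd'
              rw [Fin.lt_def]
              simp only [Fin.coe_natAdd]
              omega
            · rw [swap_natAdd, blockPerm_mul, one_mul]
        set w := blockPerm σ τ with hw
        set s := Equiv.swap i j with hs
        have hss : s * s = 1 := Equiv.swap_mul_self i j
        have hw_eq : s * (s * w) = w := by rw [← mul_assoc, hss, one_mul]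
        have Hcond : ∀ p q : Fin (a + b), p < q → (s * w) q < (s * w) p →
            s ((s * w) q) < s ((s * w) p) := by
          intro p q hpq hlt
          have e1 : s ((s * w) q) = w q := by
            simp [Perm.mul_apply, hs, Equiv.swap_apply_self]
          have e2 : s ((s * w) p) = w p := by
            simp [Perm.mul_apply, hs, Equiv.swap_apply_self]
          rw [e1, e2]
          simp only [Perm.mul_apply] at hlt
          by_cases c1 : w q = j ∧ w p = i
          · exfalso
            have hq' : q = w⁻¹ j := by rw [← c1.1]; simp
            have hp' : p = w⁻¹ i := by rw [← c1.2]; simp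
            rw [hq', hp'] at hpq
            exact absurd hpq (not_lt_of_gt hdesc)
          · by_cases c2 : w q = i ∧ w p = j
            · rw [c2.1, c2.2, Fin.lt_def]
              omega
            · exact (swap_adj_lt hij (w q) (w p) c2 c1).mp hlt
        have hadd : coxLen (s * (s * w)) = coxLen s + coxLen (s * w) :=
          coxLen_mul_add s (s * w) Hcond
        have hadd' : coxLen w = coxLen s + coxLen (s * w) := by rwa [hw_eq] at hadd
        have hspos : 0 < coxLen s := by
          apply Finset.card_pos.mpr
          refine ⟨(i, j), ?_⟩
          simp only [Finset.mem_filter, Finset.mem_univ, true_and, hs,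
            Equiv.swap_apply_left, Equiv.swap_apply_right]
          constructor <;> rw [Fin.lt_def] <;> omega
        have hlt : coxLen (s * w) < n := by omega
        have IHres := IH (coxLen (s * w)) hlt σ₂ τ₂ (by rw [← hsw]) f g hf
        rw [← hsw] at IHres
        have hfact : D w = D s * D (s * w) := by
          have := hmul s (s * w) hadd
          rwa [hw_eq] at this
        rw [hfact, Module.End.mul_apply, Module.End.mul_apply, IHres,
          pull i j hij f _ hfinv]
  constructor
  · intro f h hf
    rw [Module.End.mul_apply, Module.End.mul_apply,
      main (coxLen (blockPerm (1 : Perm (Fin a)) (Fin.revPerm : Perm (Fin b)))) 1 Fin.revPerm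
        rfl f h hf,
      main (coxLen (blockPerm (Fin.revPerm : Perm (Fin a)) (1 : Perm (Fin b)))) Fin.revPerm 1
        rfl f _ hf]
  · have e1 : blockPerm (Fin.revPerm : Perm (Fin a)) (1 : Perm (Fin b))
        * blockPerm 1 Fin.revPerm = blockPerm Fin.revPerm Fin.revPerm := by
      rw [blockPerm_mul, mul_one, one_mul]
    have l1 : coxLen (blockPerm (Fin.revPerm : Perm (Fin a)) (1 : Perm (Fin b))
          * blockPerm 1 Fin.revPerm)
        = coxLen (blockPerm (Fin.revPerm : Perm (Fin a)) (1 : Perm (Fin b)))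
          + coxLen (blockPerm (1 : Perm (Fin a)) (Fin.revPerm : Perm (Fin b))) :=
      coxLen_mul_add _ _ (hyp1 a b)
    have l2 : coxLen (blockPerm (Fin.revPerm : Perm (Fin a)) (Fin.revPerm : Perm (Fin b))
          * wShRev a b)
        = coxLen (blockPerm (Fin.revPerm : Perm (Fin a)) (Fin.revPerm : Perm (Fin b)))
          + coxLen (wShRev a b) :=
      coxLen_mul_add _ _ (hyp2 a b)
    have l2' : coxLen ((blockPerm (Fin.revPerm : Perm (Fin a)) (1 : Perm (Fin b))
          * blockPerm 1 Fin.revPerm) * wShRev a b)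
        = coxLen (blockPerm (Fin.revPerm : Perm (Fin a)) (1 : Perm (Fin b))
          * blockPerm 1 Fin.revPerm) + coxLen (wShRev a b) := by
      rw [e1]; exact l2
    have key := hmul _ _ l2'
    rw [hmul _ _ l1] at key
    have e3 : (blockPerm (Fin.revPerm : Perm (Fin a)) (1 : Perm (Fin b))
          * blockPerm 1 Fin.revPerm) * wShRev a b = (Fin.revPerm : Perm (Fin (a + b))) := by
      rw [e1, comp_eq_rev]
    rw [e3] at key
    exact key.symm
end
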